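/- Let θ⁰, t ∈ ℂ and P, Q ∈ M₂(ℂ). Define the 4×4 matrices A₀ = [[O, I],[O, O]], A₁ = [[O, P−t],[I, O]], the 4×2 matrix B = (−Q; I₂), and the 2×4 matrix C = (−P, −PQ+θ⁰I₂). Let U ⊆ ℂ be open and let Ŷ : U → ℂ⁴ and Ẑ : U → ℂ² be differentiable functions satisfying A₀Ŷ′(ξ) = −(ξI₄ − A₁)Ŷ(ξ) + BẐ(ξ) and Ẑ′(ξ) = −CŶ(ξ) for all ξ ∈ U. Write Ŷ = (Y₁; Y₂) with Y₁, Y₂ : U → ℂ². Then the function W := (Y₂; Ẑ) : U → ℂ⁴ satisfies W′(ξ) = [ξ²·[[−I₂, O],[O, O]] + ξ·[[O, I₂],[P, O]] + [[P−t, −Q],[PQ−θ⁰I₂, −P]]]·W(ξ) on U. -/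

import Mathlib

/-!
The Laplace transform elimination step relating the linear system of spectral type
(((11)))₂,22 to the system of spectral type (((2)))(((11))): from
`A₀Ŷ′ = −(ξ−A₁)Ŷ + BẐ`, `Ẑ′ = −CŶ`, the vector `W = (Y₂; Ẑ)` satisfies
`W′ = [ξ²[[−I,O],[O,O]] + ξ[[O,I],[P,O]] + [[P−t, −Q],[PQ−θ⁰, −P]]]W`.
-/

open Matrix

theorem laplace_elimination_matrix_PII
    (θ0 t : ℂ) (P Q : Matrix (Fin 2) (Fin 2) ℂ)
    (A0 A1 : Matrix (Fin 2 ⊕ Fin 2) (Fin 2 ⊕ Fin 2) ℂ)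
    (hA0 : A0 = fromBlocks 0 1 0 0)
    (hA1 : A1 = fromBlocks 0 (P - t • (1 : Matrix (Fin 2) (Fin 2) ℂ)) 1 0)
    (B : Matrix (Fin 2 ⊕ Fin 2) (Fin 2) ℂ)
    (hB : B = fromRows (-Q) (1 : Matrix (Fin 2) (Fin 2) ℂ))
    (C : Matrix (Fin 2) (Fin 2 ⊕ Fin 2) ℂ)
    (hC : C = fromCols (-P) (-(P * Q) + θ0 • (1 : Matrix (Fin 2) (Fin 2) ℂ)))
    (U : Set ℂ) (hU : IsOpen U)
    (Yh : ℂ → (Fin 2 ⊕ Fin 2 → ℂ)) (Zh : ℂ → (Fin 2 → ℂ))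
    (Yd : ℂ → (Fin 2 ⊕ Fin 2 → ℂ)) (Zd : ℂ → (Fin 2 → ℂ))
    (hYd : ∀ ξ ∈ U, ∀ i, HasDerivAt (fun z => Yh z i) (Yd ξ i) ξ)
    (hZd : ∀ ξ ∈ U, ∀ i, HasDerivAt (fun z => Zh z i) (Zd ξ i) ξ)
    (heq1 : ∀ ξ ∈ U,
      A0.mulVec (Yd ξ)
        = -((ξ • (1 : Matrix (Fin 2 ⊕ Fin 2) (Fin 2 ⊕ Fin 2) ℂ) - A1).mulVec (Yh ξ))
          + B.mulVec (Zh ξ))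
    (heq2 : ∀ ξ ∈ U, Zd ξ = -(C.mulVec (Yh ξ))) :
    ∀ ξ ∈ U, ∀ i : Fin 2 ⊕ Fin 2,
      HasDerivAt (fun z => Sum.elim (fun j => Yh z (Sum.inr j)) (Zh z) i)
        (((ξ ^ 2 • (fromBlocks (-1) 0 0 0 : Matrix (Fin 2 ⊕ Fin 2) (Fin 2 ⊕ Fin 2) ℂ)
            + ξ • (fromBlocks 0 1 P 0 : Matrix (Fin 2 ⊕ Fin 2) (Fin 2 ⊕ Fin 2) ℂ)
            + fromBlocks (P - t • (1 : Matrix (Fin 2) (Fin 2) ℂ)) (-Q)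
                (P * Q - θ0 • (1 : Matrix (Fin 2) (Fin 2) ℂ)) (-P)).mulVec
          (Sum.elim (fun j => Yh ξ (Sum.inr j)) (Zh ξ))) i) ξ := by
  intro ξ hξ i
  set Y1 : Fin 2 → ℂ := fun j => Yh ξ (Sum.inl j) with hY1def
  set Y2 : Fin 2 → ℂ := fun j => Yh ξ (Sum.inr j) with hY2def
  set Z : Fin 2 → ℂ := Zh ξ with hZdef
  have hYe : Yh ξ = Sum.elim Y1 Y2 := by funext j; cases j <;> rfl
  -- the coefficient matrix in the hypothesis as a block matrix
  have hM : ξ • (1 : Matrix (Fin 2 ⊕ Fin 2) (Fin 2 ⊕ Fin 2) ℂ) - A1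
      = fromBlocks (ξ • 1) (-(P - t • (1 : Matrix (Fin 2) (Fin 2) ℂ))) (-1) (ξ • 1) := by
    rw [hA1, ← fromBlocks_one, fromBlocks_smul, sub_eq_add_neg, fromBlocks_neg, fromBlocks_add]
    simp
  have h1 := heq1 ξ hξ
  rw [hA0, hB, hM, hYe, fromBlocks_mulVec, fromBlocks_mulVec, fromRows_mulVec] at h1
  -- bottom block of h1 : Y1 = ξ • Y2 - Z
  have hbot : Y1 = ξ • Y2 - Z := by
    funext j
    have := congrFun h1 (Sum.inr j)
    simp only [Sum.elim_comp_inl, Sum.elim_comp_inr] at this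
    simp [smul_mulVec, one_mulVec, neg_mulVec, zero_mulVec, sub_mulVec] at this ⊢
    linear_combination -this
  -- top block of h1
  have htop : ∀ j, Yd ξ (Sum.inr j)
      = (-(ξ • Y1) + (P - t • (1 : Matrix (Fin 2) (Fin 2) ℂ)) *ᵥ Y2 + (-Q) *ᵥ Z) j := by
    intro j
    have := congrFun h1 (Sum.inl j)
    simp only [Sum.elim_comp_inl, Sum.elim_comp_inr] at this
    fin_cases j <;> simp [smul_mulVec, one_mulVec, neg_mulVec, zero_mulVec, sub_mulVec, vecHead, vecTail] at this ⊢ <;>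
    linear_combination this
  -- heq2 rewritten
  have h2 : Zd ξ = P *ᵥ Y1 + (P * Q - θ0 • (1 : Matrix (Fin 2) (Fin 2) ℂ)) *ᵥ Y2 := by
    have := heq2 ξ hξ
    rw [hC, hYe, fromCols_mulVec_sumElim] at this
    rw [this]
    ext j
    fin_cases j <;> simp [neg_mulVec, add_mulVec, sub_mulVec, vecHead, vecTail] <;>
    ring
  -- the goal matrix as a single block matrix
  have hGM : (ξ ^ 2 • (fromBlocks (-1) 0 0 0 : Matrix (Fin 2 ⊕ Fin 2) (Fin 2 ⊕ Fin 2) ℂ)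
            + ξ • (fromBlocks 0 1 P 0 : Matrix (Fin 2 ⊕ Fin 2) (Fin 2 ⊕ Fin 2) ℂ)
            + fromBlocks (P - t • (1 : Matrix (Fin 2) (Fin 2) ℂ)) (-Q)
                (P * Q - θ0 • (1 : Matrix (Fin 2) (Fin 2) ℂ)) (-P))
      = fromBlocks (ξ ^ 2 • (-1) + (P - t • (1 : Matrix (Fin 2) (Fin 2) ℂ)))
          (ξ • 1 + -Q) (ξ • P + (P * Q - θ0 • (1 : Matrix (Fin 2) (Fin 2) ℂ))) (-P) := by
    rw [fromBlocks_smul, fromBlocks_smul, fromBlocks_add, fromBlocks_add]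
    simp
  rw [hGM, fromBlocks_mulVec]
  cases i with
  | inl j =>
      have hval : Yd ξ (Sum.inr j)
          = ((ξ ^ 2 • (-1 : Matrix (Fin 2) (Fin 2) ℂ)
              + (P - t • (1 : Matrix (Fin 2) (Fin 2) ℂ))) *ᵥ (Sum.elim Y2 Z ∘ Sum.inl)
            + (ξ • (1 : Matrix (Fin 2) (Fin 2) ℂ) + -Q) *ᵥ (Sum.elim Y2 Z ∘ Sum.inr)) j := by
        rw [htop j, hbot]
        simp only [Sum.elim_comp_inl, Sum.elim_comp_inr]
        fin_cases j <;> simp [add_mulVec, smul_mulVec, one_mulVec, neg_mulVec, smul_sub, smul_smul,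
          sq, sub_mulVec, mulVec_sub, mulVec_smul, vecHead, vecTail] <;>
        ring
      have h := hYd ξ hξ (Sum.inr j)
      rw [hval] at h
      exact h
  | inr j =>
      have hval : Zd ξ j
          = ((ξ • P + (P * Q - θ0 • (1 : Matrix (Fin 2) (Fin 2) ℂ))) *ᵥ (Sum.elim Y2 Z ∘ Sum.inl)
            + (-P) *ᵥ (Sum.elim Y2 Z ∘ Sum.inr)) j := by
        rw [h2, hbot]
        simp only [Sum.elim_comp_inl, Sum.elim_comp_inr]
        fin_cases j <;> simp [add_mulVec, smul_mulVec, neg_mulVec, sub_mulVec, mulVec_sub, mulVec_smul, vecHead, vecTail] <;>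
        ring
      have h := hZd ξ hξ j
      rw [hval] at h
      exact h
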